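/- Let a, b, x be real numbers with 0 < a ≤ b and 0 < b·x < π. Then 0 ≤ b·coth(b·x) − a·coth(a·x) ≤ (x/3)·(b² − a²) − (x³/45)·(b⁴ − a⁴) + (2x⁵/945)·(b⁶ − a⁶), where coth t = cosh t / sinh t. -/

import Mathlib

/-!
Put `F t = t * coth t` and `P t = t^2/3 - t^4/45 + 2 t^6/945`. Multiplying by `x`, the two
inequalities say `F (a x) ≤ F (b x)` and `P (a x) - F (a x) ≤ P (b x) - F (b x)`, so it suffices
that `F` and `P - F` are monotone on `(0, π]`. Since `F' = (sinh t cosh t - t) / sinh² t`, the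
first is `t ≤ sinh t cosh t`, and the second is `sinh t cosh t - t ≤ P'(t) sinh² t`. For the latter,
bound `sinh` below by its Taylor polynomial and `sinh`, `cosh` above by their Taylor polynomials plus
the remainder `cosh t · t^k / k!`, with `cosh t ≤ e^4 < 55` on `[0, π]`: what is left is a
polynomial in `t` with nonnegative coefficients.
-/

open Real Set Finset Nat

noncomputable def sinhTaylor (n : ℕ) (t : ℝ) : ℝ := ∑ k ∈ range n, t ^ (2 * k + 1) / (2 * k + 1)!

noncomputable def coshTaylor (n : ℕ) (t : ℝ) : ℝ := ∑ k ∈ range n, t ^ (2 * k) / (2 * k)!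

theorem hasDerivAt_pow_succ_div_factorial (m : ℕ) (t : ℝ) :
    HasDerivAt (fun s : ℝ => s ^ (m + 1) / (m + 1)!) (t ^ m / m !) t := by
  refine ((hasDerivAt_pow (m + 1) t).div_const ((m + 1)! : ℝ)).congr_deriv ?_
  rw [Nat.factorial_succ]
  push_cast
  field_simp

theorem hasDerivAt_sinhTaylor (n : ℕ) (t : ℝ) :
    HasDerivAt (sinhTaylor n) (coshTaylor n t) t := by
  unfold sinhTaylor coshTaylor
  exact HasDerivAt.fun_sum fun k _ => hasDerivAt_pow_succ_div_factorial (2 * k) t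

theorem hasDerivAt_coshTaylor_succ (n : ℕ) (t : ℝ) :
    HasDerivAt (coshTaylor (n + 1)) (sinhTaylor n t) t := by
  have h : coshTaylor (n + 1) =
      fun s : ℝ => (∑ k ∈ range n, s ^ (2 * k + 1 + 1) / ((2 * k + 1 + 1)! : ℝ)) + 1 := by
    ext s
    simp [coshTaylor, sum_range_succ', Nat.mul_succ]
  rw [h]
  exact (HasDerivAt.fun_sum fun k _ =>
    hasDerivAt_pow_succ_div_factorial (2 * k + 1) t).add_const 1

theorem sinhTaylor_le_sinh (n : ℕ) {t : ℝ} (ht : 0 ≤ t) : sinhTaylor n t ≤ sinh t :=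
  sum_le_hasSum _ (fun _ _ => by positivity) (hasSum_sinh t)

theorem coshTaylor_le_cosh (n : ℕ) (t : ℝ) : coshTaylor n t ≤ cosh t :=
  sum_le_hasSum _ (fun k _ => by simp only [pow_mul]; positivity) (hasSum_cosh t)

theorem le_of_hasDerivAt_le {f g f' g' : ℝ → ℝ} {a b : ℝ} (hf : ∀ t, HasDerivAt f (f' t) t)
    (hg : ∀ t, HasDerivAt g (g' t) t) (ha : f a ≤ g a) (h' : ∀ t ∈ Ico a b, f' t ≤ g' t) :
    ∀ ⦃t⦄, t ∈ Icc a b → f t ≤ g t :=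
  image_le_of_deriv_right_le_deriv_boundary
    (continuous_iff_continuousAt.2 fun t => (hf t).continuousAt).continuousOn
    (fun t _ => (hf t).hasDerivWithinAt) ha
    (continuous_iff_continuousAt.2 fun t => (hg t).continuousAt).continuousOn
    (fun t _ => (hg t).hasDerivWithinAt) h'

section TaylorRemainder

variable {B c : ℝ}

theorem sinh_le_sinhTaylor_add_of_cosh_le (n : ℕ)
    (h : ∀ s ∈ Icc 0 B, cosh s ≤ coshTaylor n s + c * (s ^ (2 * n) / (2 * n)!)) :
    ∀ ⦃t⦄, t ∈ Icc 0 B → sinh t ≤ sinhTaylor n t + c * (t ^ (2 * n + 1) / (2 * n + 1)!) :=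
  le_of_hasDerivAt_le hasDerivAt_sinh
    (fun s => (hasDerivAt_sinhTaylor n s).fun_add
      ((hasDerivAt_pow_succ_div_factorial (2 * n) s).const_mul c))
    (by simp [sinhTaylor]) fun s hs => h s (Ico_subset_Icc_self hs)

theorem cosh_le_coshTaylor_add_of_sinh_le (n : ℕ)
    (h : ∀ s ∈ Icc 0 B, sinh s ≤ sinhTaylor n s + c * (s ^ (2 * n + 1) / (2 * n + 1)!)) :
    ∀ ⦃t⦄, t ∈ Icc 0 B →
      cosh t ≤ coshTaylor (n + 1) t + c * (t ^ (2 * (n + 1)) / (2 * (n + 1))!) :=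
  le_of_hasDerivAt_le hasDerivAt_cosh
    (fun s => (hasDerivAt_coshTaylor_succ n s).fun_add
      ((hasDerivAt_pow_succ_div_factorial (2 * n + 1) s).const_mul c))
    (by simp [coshTaylor, sum_range_succ']) fun s hs => h s (Ico_subset_Icc_self hs)

theorem cosh_le_coshTaylor_add_remainder (n : ℕ) {t : ℝ} (ht : t ∈ Icc 0 B) :
    cosh t ≤ coshTaylor n t + cosh B * (t ^ (2 * n) / (2 * n)!) := by
  induction n generalizing t with
  | zero =>
    simpa [coshTaylor, cosh_le_cosh, abs_of_nonneg ht.1, abs_of_nonneg (ht.1.trans ht.2)]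
      using ht.2
  | succ n ih =>
    exact cosh_le_coshTaylor_add_of_sinh_le n
      (sinh_le_sinhTaylor_add_of_cosh_le n fun _ hs => ih hs) ht

end TaylorRemainder

theorem sinh_le_sinhTaylor_add_remainder (n : ℕ) {t : ℝ} (ht : 0 ≤ t) :
    sinh t ≤ sinhTaylor n t + cosh t * (t ^ (2 * n + 1) / (2 * n + 1)!) :=
  sinh_le_sinhTaylor_add_of_cosh_le n (fun _ hs => cosh_le_coshTaylor_add_remainder n hs)
    ⟨ht, le_rfl⟩

theorem cosh_le_55 {t : ℝ} (ht : |t| ≤ 4) : cosh t ≤ 55 := calc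
  cosh t ≤ cosh 4 := cosh_le_cosh.2 (by rwa [abs_of_pos (by norm_num : (0 : ℝ) < 4)])
  _ ≤ exp 4 := by rw [cosh_eq]; linarith [exp_le_exp.2 (by norm_num : (-4 : ℝ) ≤ 4)]
  _ = exp 1 ^ 4 := by rw [← exp_nat_mul]; norm_num
  _ ≤ 2.7182818286 ^ 4 := by gcongr; exact exp_one_lt_d9.le
  _ ≤ 55 := by norm_num

theorem sinh_mul_cosh_sub_self_le {t : ℝ} (ht : 0 ≤ t) (htπ : t ≤ π) :
    sinh t * cosh t - t ≤ (2 * t / 3 - 4 * t ^ 3 / 45 + 4 * t ^ 5 / 315) * sinh t ^ 2 := by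
  have hcosh : cosh t ≤ 55 := cosh_le_55 (by rw [abs_of_nonneg ht]; linarith [pi_lt_four])
  have hsinh_lower : sinhTaylor 6 t ≤ sinh t := sinhTaylor_le_sinh 6 ht
  have hsinh_upper : sinh t ≤ sinhTaylor 6 t + 55 * (t ^ 13 / 13!) :=
    (sinh_le_sinhTaylor_add_remainder 6 ht).trans (by gcongr)
  have hcosh_upper : cosh t ≤ coshTaylor 6 t + 55 * (t ^ 12 / 12!) :=
    (cosh_le_coshTaylor_add_remainder 6 ⟨ht, le_rfl⟩).trans (by gcongr)
  have hpoly : 0 ≤ (2 * t / 3 - 4 * t ^ 3 / 45 + 4 * t ^ 5 / 315) * sinhTaylor 6 t ^ 2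
      - (sinhTaylor 6 t + 55 * (t ^ 13 / 13!)) * (coshTaylor 6 t + 55 * (t ^ 12 / 12!)) + t := by
    simp only [sinhTaylor, coshTaylor, sum_range_succ, sum_range_zero, Nat.factorial]
    norm_num
    ring_nf
    positivity
  have hcoeff : 0 ≤ 2 * t / 3 - 4 * t ^ 3 / 45 + 4 * t ^ 5 / 315 := by
    nlinarith [mul_nonneg ht (sq_nonneg (t ^ 2 - 7 / 2))]
  have hsinhTaylor_nonneg : 0 ≤ sinhTaylor 6 t := sum_nonneg fun _ _ => by positivity
  calc sinh t * cosh t - t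
      ≤ (sinhTaylor 6 t + 55 * (t ^ 13 / 13!)) * (coshTaylor 6 t + 55 * (t ^ 12 / 12!)) - t := by
        gcongr
    _ ≤ (2 * t / 3 - 4 * t ^ 3 / 45 + 4 * t ^ 5 / 315) * sinhTaylor 6 t ^ 2 := by linarith
    _ ≤ (2 * t / 3 - 4 * t ^ 3 / 45 + 4 * t ^ 5 / 315) * sinh t ^ 2 := by gcongr

theorem hasDerivAt_mul_cosh_div_sinh {t : ℝ} (ht : t ≠ 0) :
    HasDerivAt (fun s => s * (cosh s / sinh s)) ((sinh t * cosh t - t) / sinh t ^ 2) t := by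
  have hsinh : sinh t ≠ 0 := sinh_ne_zero.2 ht
  refine ((hasDerivAt_id t).mul
    ((hasDerivAt_cosh t).div (hasDerivAt_sinh t) hsinh)).congr_deriv ?_
  simp only [id, Pi.div_apply]
  field_simp
  linear_combination t * sinh_sq t

theorem monotoneOn_mul_cosh_div_sinh : MonotoneOn (fun t => t * (cosh t / sinh t)) (Ioi 0) := by
  refine monotoneOn_of_hasDerivWithinAt_nonneg (convex_Ioi 0)
    (fun t ht => (hasDerivAt_mul_cosh_div_sinh (ne_of_gt ht)).continuousAt.continuousWithinAt)
    (fun t ht => (hasDerivAt_mul_cosh_div_sinh (ne_of_gt (interior_subset ht))).hasDerivWithinAt)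
    fun t ht => ?_
  rw [interior_Ioi] at ht
  have : t ≤ sinh t * cosh t := by
    nlinarith [self_le_sinh_iff.2 (le_of_lt ht), one_le_cosh t, sinh_nonneg_iff.2 (le_of_lt ht)]
  exact div_nonneg (by linarith) (sq_nonneg _)

theorem monotoneOn_sub_mul_cosh_div_sinh :
    MonotoneOn (fun t => t ^ 2 / 3 - t ^ 4 / 45 + 2 * t ^ 6 / 945 - t * (cosh t / sinh t))
      (Ioc 0 π) := by
  have hderiv : ∀ t ∈ Ioc 0 π, HasDerivAt
      (fun t => t ^ 2 / 3 - t ^ 4 / 45 + 2 * t ^ 6 / 945 - t * (cosh t / sinh t))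
      (2 * t / 3 - 4 * t ^ 3 / 45 + 4 * t ^ 5 / 315 - (sinh t * cosh t - t) / sinh t ^ 2) t := by
    intro t ht
    refine HasDerivAt.sub ?_ (hasDerivAt_mul_cosh_div_sinh (ne_of_gt ht.1))
    refine ((((hasDerivAt_pow 2 t).div_const 3).fun_sub
      ((hasDerivAt_pow 4 t).div_const 45)).fun_add
        (((hasDerivAt_pow 6 t).const_mul 2).div_const 945)).congr_deriv ?_
    norm_num
    ring
  refine monotoneOn_of_hasDerivWithinAt_nonneg (convex_Ioc 0 π)
    (fun t ht => (hderiv t ht).continuousAt.continuousWithinAt)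
    (fun t ht => (hderiv t (interior_subset ht)).hasDerivWithinAt) fun t ht => ?_
  rw [interior_Ioc] at ht
  rw [sub_nonneg, div_le_iff₀ (pow_pos (sinh_pos_iff.2 ht.1) 2)]
  exact sinh_mul_cosh_sub_self_le ht.1.le ht.2.le

/-- For `0 < a ≤ b` and `0 < b·x < π`,
`0 ≤ b·coth(b·x) − a·coth(a·x)
   ≤ (x/3)·(b² − a²) − (x³/45)·(b⁴ − a⁴) + (2x⁵/945)·(b⁶ − a⁶)`. -/
theorem stmt_19 (a b x : ℝ) (ha : 0 < a) (hab : a ≤ b)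
    (hx : 0 < b * x) (hxπ : b * x < π) :
    0 ≤ b * (cosh (b * x) / sinh (b * x)) - a * (cosh (a * x) / sinh (a * x)) ∧
    b * (cosh (b * x) / sinh (b * x)) - a * (cosh (a * x) / sinh (a * x)) ≤
      (x / 3) * (b ^ 2 - a ^ 2) - (x ^ 3 / 45) * (b ^ 4 - a ^ 4) +
        (2 * x ^ 5 / 945) * (b ^ 6 - a ^ 6) := by
  have hx0 : 0 < x := pos_of_mul_pos_right hx (ha.trans_le hab).le
  have hle : a * x ≤ b * x := mul_le_mul_of_nonneg_right hab hx0.le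
  have hax : a * x ∈ Ioc 0 π := ⟨mul_pos ha hx0, hle.trans hxπ.le⟩
  have hbx : b * x ∈ Ioc 0 π := ⟨hx, hxπ.le⟩
  have hlower := monotoneOn_mul_cosh_div_sinh hax.1 hbx.1 hle
  have hupper := monotoneOn_sub_mul_cosh_div_sinh hax hbx hle
  have hscale : b * (cosh (b * x) / sinh (b * x)) - a * (cosh (a * x) / sinh (a * x)) =
      (b * x * (cosh (b * x) / sinh (b * x)) - a * x * (cosh (a * x) / sinh (a * x))) / x := by
    field_simp
  rw [hscale, div_le_iff₀ hx0]
  refine ⟨div_nonneg (by linarith) hx0.le, ?_⟩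
  linear_combination hupper
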